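/- arXiv:1709.08031 — 2 statements merged into one kernel-verified Lean document; each statement's English description precedes it below -/
import Mathlib

section
/- In the linear model Y = Xβ + ε with independent, mean-zero errors having variances σ_i^2, the i-th OLS residual u_i = Y_i − x_i'β̂ satisfies Var(u_i) = σ_i^2(1 − p_{ii}) + Σ_{j=1}^N p_{ij}^2 (σ_j^2 − σ_i^2). -/
open MeasureTheory ProbabilityTheory Matrix

/-! The hat matrix `P = X (X'X)⁻¹ X'` is symmetric, idempotent and fixes the columns of `X`,
so the residual vector is `(I - P) ε` and `u_i = ∑_j (δ_ij - p_ij) ε_j` is a linear combination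
of independent errors, with variance `∑_j (δ_ij - p_ij)² σ_j²`. Rearranging this with
`p_ii = ∑_j p_ij²`, the diagonal of `P = P'P`, gives the stated form. -/

namespace Matrix

variable {m n R : Type*} [Fintype m] [Fintype n] [DecidableEq n]

theorem isUnit_of_rank_eq_card [Field R] {A : Matrix n n R} (hA : A.rank = Fintype.card n) :
    IsUnit A := by
  have hrange : LinearMap.range A.mulVecLin = ⊤ :=
    Submodule.eq_top_of_finrank_eq (by rw [← rank, hA, Module.finrank_fintype_fun_eq_card])
  exact mulVec_surjective_iff_isUnit.mp (LinearMap.range_eq_top.mp hrange)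

theorem isUnit_transpose_mul_self_of_rank_eq_card [Field R] [LinearOrder R]
    [IsStrictOrderedRing R] {X : Matrix m n R} (hX : X.rank = Fintype.card n) :
    IsUnit (Xᵀ * X) :=
  isUnit_of_rank_eq_card (by rw [rank_transpose_mul_self, hX])

variable [CommRing R]

noncomputable def hatMatrix (X : Matrix m n R) : Matrix m m R := X * (Xᵀ * X)⁻¹ * Xᵀ

theorem hatMatrix_mul_self_of_isUnit {X : Matrix m n R} (hX : IsUnit (Xᵀ * X).det) :
    hatMatrix X * X = X := by
  rw [hatMatrix, Matrix.mul_assoc, Matrix.mul_assoc, nonsing_inv_mul _ hX, Matrix.mul_one]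

theorem transpose_hatMatrix (X : Matrix m n R) : (hatMatrix X)ᵀ = hatMatrix X := by
  simp only [hatMatrix, transpose_mul, transpose_transpose, transpose_nonsing_inv,
    Matrix.mul_assoc]

theorem hatMatrix_mul_hatMatrix {X : Matrix m n R} (hX : IsUnit (Xᵀ * X).det) :
    hatMatrix X * hatMatrix X = hatMatrix X := by
  change hatMatrix X * (X * (Xᵀ * X)⁻¹ * Xᵀ) = _
  rw [← Matrix.mul_assoc, ← Matrix.mul_assoc, hatMatrix_mul_self_of_isUnit hX, hatMatrix]

theorem residual_eq_one_sub_hatMatrix_mulVec [DecidableEq m] {X : Matrix m n R}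
    (hX : IsUnit (Xᵀ * X).det) (β : n → R) (e : m → R) :
    (X *ᵥ β + e) - X *ᵥ (((Xᵀ * X)⁻¹ * Xᵀ) *ᵥ (X *ᵥ β + e)) = (1 - hatMatrix X) *ᵥ e := by
  rw [mulVec_mulVec, ← Matrix.mul_assoc, ← hatMatrix, mulVec_add, mulVec_mulVec,
    hatMatrix_mul_self_of_isUnit hX, sub_mulVec, one_mulVec]
  abel

theorem apply_self_eq_sum_sq_of_mul_self_of_transpose {P : Matrix m m R}
    (hidem : P * P = P) (hsymm : Pᵀ = P) (i : m) : P i i = ∑ j, P i j ^ 2 := by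
  conv_lhs => rw [← hidem, mul_apply]
  refine Finset.sum_congr rfl fun j _ => ?_
  rw [sq, ← transpose_apply P j i, hsymm]

theorem sum_one_sub_apply_sq_mul [DecidableEq m] {P : Matrix m m R} {i : m}
    (hdiag : P i i = ∑ j, P i j ^ 2) (σ : m → R) :
    ∑ j, (1 - P) i j ^ 2 * σ j = σ i * (1 - P i i) + ∑ j, P i j ^ 2 * (σ j - σ i) := by
  have hexpand : ∀ j, (1 - P) i j ^ 2 * σ j =
      (if i = j then (1 - 2 * P i i) * σ i else 0) + P i j ^ 2 * σ j := by
    intro j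
    rcases eq_or_ne i j with rfl | hij
    · simp only [sub_apply, one_apply_eq, if_true]; ring
    · simp [one_apply_ne hij, hij]
  simp only [hexpand, Finset.sum_add_distrib, Finset.sum_ite_eq, Finset.mem_univ, if_true,
    mul_sub, Finset.sum_sub_distrib, ← Finset.sum_mul, ← hdiag]
  ring

end Matrix

theorem ProbabilityTheory.variance_sum_const_mul {Ω ι : Type*} [MeasurableSpace Ω] {μ : Measure Ω}
    [Fintype ι] {ε : ι → Ω → ℝ} (hL2 : ∀ i, MemLp (ε i) 2 μ) (hindep : iIndepFun ε μ)
    (a : ι → ℝ) :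
    variance (fun ω => ∑ j, a j * ε j ω) μ = ∑ j, a j ^ 2 * variance (ε j) μ := by
  have hsum : (fun ω => ∑ j, a j * ε j ω) = ∑ j, fun ω => a j * ε j ω := by
    ext ω; rw [Finset.sum_apply]
  rw [hsum, IndepFun.variance_sum (fun j _ => (hL2 j).const_mul (a j))
    fun j _ k _ hjk => (hindep.indepFun hjk).comp (measurable_const_mul _) (measurable_const_mul _)]
  simp only [variance_const_mul]

theorem stmt_6_general {Ω : Type*} [MeasureSpace Ω]
    {N c : ℕ} (X : Matrix (Fin N) (Fin c) ℝ) (hX : X.rank = c)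
    (β : Fin c → ℝ) (ε : Fin N → Ω → ℝ)
    (hL2 : ∀ i, MemLp (ε i) 2 ℙ)
    (hindep : iIndepFun ε ℙ)
    (σsq : Fin N → ℝ) (hvar : ∀ i, variance (ε i) ℙ = σsq i)
    (Y : Ω → Fin N → ℝ) (hY : ∀ ω, Y ω = X.mulVec β + fun i => ε i ω)
    (βhat : Ω → Fin c → ℝ) (hβhat : ∀ ω, βhat ω = ((Xᵀ * X)⁻¹ * Xᵀ).mulVec (Y ω))
    (P : Matrix (Fin N) (Fin N) ℝ) (hP : P = X * (Xᵀ * X)⁻¹ * Xᵀ)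
    (u : Ω → Fin N → ℝ) (hu : ∀ ω i, u ω i = Y ω i - X.mulVec (βhat ω) i)
    (i : Fin N) :
    variance (fun ω => u ω i) ℙ =
      σsq i * (1 - P i i) + ∑ j, (P i j)^2 * (σsq j - σsq i) := by
  obtain rfl : P = hatMatrix X := hP
  have hdet : IsUnit (Xᵀ * X).det := (isUnit_iff_isUnit_det _).mp
    (isUnit_transpose_mul_self_of_rank_eq_card (by rw [hX, Fintype.card_fin]))
  have hresidual : (fun ω => u ω i) = fun ω => ∑ j, (1 - hatMatrix X) i j * ε j ω := by
    funext ω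
    rw [hu, ← Pi.sub_apply (Y ω), hβhat, hY, residual_eq_one_sub_hatMatrix_mulVec hdet]
    rfl
  rw [hresidual, variance_sum_const_mul hL2 hindep]
  simp only [hvar]
  exact sum_one_sub_apply_sq_mul (apply_self_eq_sum_sq_of_mul_self_of_transpose
    (hatMatrix_mul_hatMatrix hdet) (transpose_hatMatrix X) i) σsq

/-- In the linear model `Y = Xβ + ε` with independent mean-zero errors of
variances `σ_i²`, the `i`-th OLS residual `u_i = Y_i − x_i'β̂` satisfies
`Var(u_i) = σ_i²(1 − p_{ii}) + Σ_j p_{ij}² (σ_j² − σ_i²)`. -/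
theorem stmt_6 {Ω : Type*} [MeasureSpace Ω] [IsProbabilityMeasure (ℙ : Measure Ω)]
    {N c : ℕ} (X : Matrix (Fin N) (Fin c) ℝ) (hX : X.rank = c)
    (β : Fin c → ℝ) (ε : Fin N → Ω → ℝ)
    (hmeas : ∀ i, Measurable (ε i)) (hL2 : ∀ i, MemLp (ε i) 2 ℙ)
    (hindep : iIndepFun ε ℙ)
    (hmean : ∀ i, (∫ ω, ε i ω) = 0)
    (σsq : Fin N → ℝ) (hvar : ∀ i, variance (ε i) ℙ = σsq i)
    (Y : Ω → Fin N → ℝ) (hY : ∀ ω, Y ω = X.mulVec β + fun i => ε i ω)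
    (βhat : Ω → Fin c → ℝ) (hβhat : ∀ ω, βhat ω = ((Xᵀ * X)⁻¹ * Xᵀ).mulVec (Y ω))
    (P : Matrix (Fin N) (Fin N) ℝ) (hP : P = X * (Xᵀ * X)⁻¹ * Xᵀ)
    (u : Ω → Fin N → ℝ) (hu : ∀ ω i, u ω i = Y ω i - X.mulVec (βhat ω) i)
    (i : Fin N) :
    variance (fun ω => u ω i) ℙ =
      σsq i * (1 - P i i) + ∑ j, (P i j)^2 * (σsq j - σsq i) :=
  stmt_6_general X hX β ε hL2 hindep σsq hvar Y hY βhat hβhat P hP u hu i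
end

section
/- Given the data Y, the wild bootstrap residual u_i* = Y_i* − x_i'β̂* with bootstrap errors ε_i* = u_i T_i/√(1−p_{ii}) (T_i i.i.d. Rademacher) has conditional second moment E(u_i*^2 | Y) = u_i^2 − (p_{ii}/(1−p_{ii})) u_i^2 + Σ_{j=1}^N p_{ij}^2 u_j^2/(1−p_{jj}). -/
open MeasureTheory ProbabilityTheory Matrix

/-!
Since `P X = X`, the fitted part `X β̂` of `Y*` is reproduced exactly by the bootstrap fit, so
`u* = (1 - P) ε*` and `u_i* = Σ_j (δ_ij - p_ij) u_j T_j / √(1 - p_jj)` is a linear combination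
of the Rademacher signs. These are orthonormal in `L²` (independent, mean zero, square one), so
`E(u_i*²) = Σ_j (δ_ij - p_ij)² u_j² / (1 - p_jj)`; expanding the square gives the formula.
-/

section Orthonormal

variable {Ω ι : Type*} {m : MeasurableSpace Ω} {μ : Measure Ω} [Fintype ι] [DecidableEq ι]

theorem integral_sq_sum_of_orthonormal {T : ι → Ω → ℝ} (hT : ∀ j, MemLp (T j) 2 μ)
    (horth : ∀ j k, ∫ ω, T j ω * T k ω ∂μ = if j = k then 1 else 0) (a : ι → ℝ) :
    ∫ ω, (∑ j, a j * T j ω) ^ 2 ∂μ = ∑ j, a j ^ 2 := by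
  have hint : ∀ j k, Integrable (fun ω => T j ω * T k ω) μ :=
    fun j k => (hT j).integrable_mul (hT k)
  have hexpand :
      ∀ ω, (∑ j, a j * T j ω) ^ 2 = ∑ j, ∑ k, a j * a k * (T j ω * T k ω) := by
    intro ω
    rw [sq, Finset.sum_mul_sum]
    simp only [mul_mul_mul_comm]
  simp_rw [hexpand]
  rw [integral_finsetSum _ fun j _ => integrable_finsetSum _ fun k _ => (hint j k).const_mul _]
  simp_rw [integral_finsetSum _ fun k _ => (hint _ k).const_mul _, integral_const_mul, horth]
  simp [sq]

end Orthonormal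

section Rademacher

variable {Ω : Type*} {m : MeasurableSpace Ω} {μ : Measure Ω}

def IsRademacher (T : Ω → ℝ) (μ : Measure Ω) : Prop :=
  μ {ω | T ω = 1} = 1 / 2 ∧ μ {ω | T ω = -1} = 1 / 2

namespace IsRademacher

variable [IsProbabilityMeasure μ] {T : Ω → ℝ}

theorem ae_eq_one_or_neg_one (hT : Measurable T) (h : IsRademacher T μ) :
    ∀ᵐ ω ∂μ, T ω = 1 ∨ T ω = -1 := by
  have hdisj : Disjoint {ω | T ω = 1} {ω | T ω = -1} :=
    (Set.disjoint_singleton.2 (by norm_num)).preimage T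
  have hfull : μ ({ω | T ω = 1} ∪ {ω | T ω = -1}) = μ Set.univ := by
    rw [measure_union hdisj (hT (measurableSet_singleton _)), h.1, h.2, ENNReal.add_halves,
      measure_univ]
  exact (ae_iff_measure_eq ((hT (measurableSet_singleton _)).union
    (hT (measurableSet_singleton _))).nullMeasurableSet).2 hfull

theorem memLp (hT : Measurable T) (h : IsRademacher T μ) (p : ENNReal) : MemLp T p μ := by
  refine MemLp.of_bound hT.aestronglyMeasurable 1 ?_
  filter_upwards [h.ae_eq_one_or_neg_one hT] with ω hω
  rcases hω with hω | hω <;> simp [hω]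

theorem integral_eq_zero (hT : Measurable T) (h : IsRademacher T μ) : ∫ ω, T ω ∂μ = 0 := by
  have hB : MeasurableSet {ω | T ω = -1} := hT (measurableSet_singleton _)
  have hT_eq : T =ᵐ[μ] fun ω => 1 - 2 * {ω | T ω = -1}.indicator 1 ω := by
    filter_upwards [h.ae_eq_one_or_neg_one hT] with ω hω
    rcases hω with hω | hω <;> norm_num [Set.indicator, hω]
  rw [integral_congr_ae hT_eq, integral_sub (integrable_const _)
    ((integrable_const 1).indicator hB |>.const_mul 2), integral_const_mul,
    integral_indicator_one hB, measureReal_def, h.2]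
  norm_num

theorem sq_ae_eq_one (hT : Measurable T) (h : IsRademacher T μ) :
    (fun ω => T ω * T ω) =ᵐ[μ] fun _ => 1 := by
  filter_upwards [h.ae_eq_one_or_neg_one hT] with ω hω
  rcases hω with hω | hω <;> simp [hω]

theorem integral_mul_eq_ite {ι : Type*} [DecidableEq ι] {T : ι → Ω → ℝ}
    (hT : ∀ j, Measurable (T j)) (hindep : iIndepFun T μ) (h : ∀ j, IsRademacher (T j) μ)
    (j k : ι) :
    ∫ ω, T j ω * T k ω ∂μ = if j = k then 1 else 0 := by
  by_cases hjk : j = k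
  · subst hjk
    simp [integral_congr_ae ((h j).sq_ae_eq_one (hT j))]
  · rw [if_neg hjk]
    have hprod := (hindep.indepFun hjk).integral_mul_eq_mul_integral
      (hT j).aestronglyMeasurable (hT k).aestronglyMeasurable
    simp only [Pi.mul_apply] at hprod
    rw [hprod, (h j).integral_eq_zero (hT j), zero_mul]

end IsRademacher

end Rademacher

section LeastSquares

variable {R n p : Type*} [Fintype n] [Fintype p] [DecidableEq p]

theorem Matrix.isUnit_transpose_mul_self_of_rank_eq [Field R] [LinearOrder R]
    [IsStrictOrderedRing R] (X : Matrix n p R) (hX : X.rank = Fintype.card p) :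
    IsUnit (Xᵀ * X) := by
  have hsurj : Function.Surjective (Xᵀ * X).mulVecLin := by
    refine LinearMap.range_eq_top.1 (Submodule.eq_top_of_finrank_eq ?_)
    rw [← Matrix.rank, rank_transpose_mul_self, hX, Module.finrank_fintype_fun_eq_card]
  exact mulVec_injective_iff_isUnit.1 (LinearMap.injective_iff_surjective.2 hsurj)

variable [CommRing R]

theorem Matrix.hat_mul_self_of_isUnit (X : Matrix n p R) (hX : IsUnit (Xᵀ * X)) :
    X * (Xᵀ * X)⁻¹ * Xᵀ * X = X := by
  rw [Matrix.mul_assoc, Matrix.mul_assoc, nonsing_inv_mul _ ((isUnit_iff_isUnit_det _).1 hX),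
    Matrix.mul_one]

theorem Matrix.sub_mulVec_leastSquares [DecidableEq n] (X : Matrix n p R)
    (hX : IsUnit (Xᵀ * X)) (β : p → R) (ε : n → R) :
    X *ᵥ β + ε - X *ᵥ (((Xᵀ * X)⁻¹ * Xᵀ) *ᵥ (X *ᵥ β + ε)) =
      (1 - X * (Xᵀ * X)⁻¹ * Xᵀ) *ᵥ ε := by
  rw [mulVec_mulVec, ← Matrix.mul_assoc, mulVec_add, mulVec_mulVec, hat_mul_self_of_isUnit X hX,
    sub_mulVec, one_mulVec]
  abel

end LeastSquares

theorem Matrix.sum_one_sub_apply_sq_mul_s8 {R n : Type*} [CommRing R] [Fintype n] [DecidableEq n]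
    (P : Matrix n n R) (w : n → R) (i : n) :
    ∑ j, (1 - P) i j ^ 2 * w j = (1 - 2 * P i i) * w i + ∑ j, P i j ^ 2 * w j := by
  have hexpand : ∀ j, (1 - P) i j ^ 2 * w j =
      (if i = j then (1 - 2 * P i i) * w i else 0) + P i j ^ 2 * w j := by
    intro j
    rcases eq_or_ne i j with rfl | hij
    · simp only [sub_apply, one_apply_eq, if_true]; ring
    · simp only [sub_apply, one_apply_ne hij, if_neg hij]; ring
  simp only [hexpand, Finset.sum_add_distrib, Finset.sum_ite_eq, Finset.mem_univ, if_true]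

/-- Given the data (so the residuals `u_i` and fitted values are fixed), the wild
bootstrap residual `u_i* = Y_i* − x_i'β̂*` with bootstrap errors
`ε_i* = u_i T_i/√(1−p_{ii})` (`T_i` i.i.d. Rademacher) has conditional second moment
`E(u_i*² | Y) = u_i² − (p_{ii}/(1−p_{ii})) u_i² + Σ_j p_{ij}² u_j²/(1−p_{jj})`. -/
theorem stmt_8 {Ω : Type*} [MeasureSpace Ω] [IsProbabilityMeasure (ℙ : Measure Ω)]
    {N c : ℕ} (X : Matrix (Fin N) (Fin c) ℝ) (hX : X.rank = c)
    (P : Matrix (Fin N) (Fin N) ℝ) (hP : P = X * (Xᵀ * X)⁻¹ * Xᵀ)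
    (hPlt : ∀ i, P i i < 1)
    (βhat : Fin c → ℝ) (u : Fin N → ℝ)
    (T : Fin N → Ω → ℝ) (hmeas : ∀ i, Measurable (T i))
    (hindep : iIndepFun T ℙ)
    (hdist : ∀ i, ℙ {ω | T i ω = 1} = 1/2 ∧ ℙ {ω | T i ω = -1} = 1/2)
    (εstar : Ω → Fin N → ℝ)
    (hεstar : ∀ ω i, εstar ω i = u i * T i ω / Real.sqrt (1 - P i i))
    (Ystar : Ω → Fin N → ℝ) (hYstar : ∀ ω, Ystar ω = X.mulVec βhat + εstar ω)
    (βstar : Ω → Fin c → ℝ)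
    (hβstar : ∀ ω, βstar ω = ((Xᵀ * X)⁻¹ * Xᵀ).mulVec (Ystar ω))
    (ustar : Ω → Fin N → ℝ)
    (hustar : ∀ ω i, ustar ω i = Ystar ω i - X.mulVec (βstar ω) i)
    (i : Fin N) :
    (∫ ω, (ustar ω i)^2) =
      u i ^ 2 - (P i i / (1 - P i i)) * u i ^ 2 +
        ∑ j, (P i j)^2 * u j ^ 2 / (1 - P j j) := by
  have hunit : IsUnit (Xᵀ * X) :=
    X.isUnit_transpose_mul_self_of_rank_eq (by rw [hX, Fintype.card_fin])
  have hpos : ∀ j, 0 < 1 - P j j := fun j => sub_pos.2 (hPlt j)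
  set a : Fin N → ℝ := fun j => (1 - P) i j * (u j / Real.sqrt (1 - P j j))
  have hresidual : ∀ ω, ustar ω i = ∑ j, a j * T j ω := by
    intro ω
    have hvec : ustar ω = (1 - P) *ᵥ εstar ω := by
      ext k
      rw [hustar, ← Pi.sub_apply, hβstar, hYstar, X.sub_mulVec_leastSquares hunit, hP]
    simp only [hvec, mulVec, dotProduct, hεstar, a]
    exact Finset.sum_congr rfl fun j _ => by ring
  calc ∫ ω, ustar ω i ^ 2
      = ∑ j, a j ^ 2 := by
        simp_rw [hresidual]
        exact integral_sq_sum_of_orthonormal (fun j => IsRademacher.memLp (hmeas j) (hdist j) 2)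
          (IsRademacher.integral_mul_eq_ite hmeas hindep hdist) a
    _ = ∑ j, (1 - P) i j ^ 2 * (u j ^ 2 / (1 - P j j)) := by
        simp only [a, mul_pow, div_pow, Real.sq_sqrt (hpos _).le]
    _ = _ := by
        rw [P.sum_one_sub_apply_sq_mul_s8]
        have hne := (hpos i).ne'
        field_simp
        ring
end
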